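/- arXiv:2208.00240 — 7 statements merged into one kernel-verified Lean document; each statement's English description precedes it below -/
import Mathlib

section
/- Let L be a commutative ring, D ∈ L, m ≥ 1, E = L[x]/(x^m − D), and a ∈ L. Then for all integers i, j with 0 ≤ i, j ≤ m − 1: Tr_{E/L}(a·x^i·x^j) = m·a if i = j = 0; Tr_{E/L}(a·x^i·x^j) = m·a·D if i + j = m; and Tr_{E/L}(a·x^i·x^j) = 0 in all other cases. -/
open Polynomial

namespace PowerBasis

variable {R S : Type*} [CommRing R] [CommRing S] [Algebra R S]

theorem repr_gen_pow_apply_of_lt (pb : PowerBasis R S) {k : ℕ} (hk : k < pb.dim)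
    (t : Fin pb.dim) : pb.basis.repr (pb.gen ^ k) t = if k = t then 1 else 0 := by
  rw [show pb.gen ^ k = pb.basis ⟨k, hk⟩ by simp, Module.Basis.repr_self_apply]
  simp [Fin.ext_iff, eq_comm]

/-- For `0 < s`, multiplication by `gen ^ s` sends `gen ^ t` to a multiple of
`gen ^ ((s + t) % dim)`, so its matrix has zero diagonal. -/
theorem trace_gen_pow_of_pow_dim_eq (pb : PowerBasis R S) {d : R}
    (hd : pb.gen ^ pb.dim = algebraMap R S d) {s : ℕ} (hs : s < pb.dim) :
    Algebra.trace R S (pb.gen ^ s) = if s = 0 then (pb.dim : R) else 0 := by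
  split_ifs with hs0
  · simpa [hs0] using Algebra.trace_algebraMap_of_basis pb.basis (1 : R)
  classical
  rw [Algebra.trace_eq_matrix_trace pb.basis, Matrix.trace]
  refine Finset.sum_eq_zero fun t _ => ?_
  rw [Matrix.diag_apply, Algebra.leftMulMatrix_eq_repr_mul, coe_basis, ← pow_add]
  rcases lt_or_ge (s + t) pb.dim with hlt | hge
  · rw [pb.repr_gen_pow_apply_of_lt hlt, if_neg (by omega)]
  · obtain ⟨r, hr⟩ := Nat.exists_eq_add_of_le hge
    rw [hr, pow_add, hd, ← Algebra.smul_def, map_smul, Finsupp.smul_apply,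
      pb.repr_gen_pow_apply_of_lt (by omega), if_neg (by omega), smul_zero]

end PowerBasis

theorem AdjoinRoot.root_pow_eq_of_X_pow_sub_C {L : Type*} [CommRing L] (D : L) (m : ℕ) :
    root (X ^ m - C D) ^ m = algebraMap L (AdjoinRoot (X ^ m - C D)) D := by
  have h := eval₂_root (X ^ m - C D)
  rwa [eval₂_sub, eval₂_X_pow, eval₂_C, sub_eq_zero] at h

theorem AdjoinRoot.trace_root_pow_of_X_pow_sub_C {L : Type*} [CommRing L] [Nontrivial L]
    (D : L) {m s : ℕ} (hs : s < m) :
    Algebra.trace L (AdjoinRoot (X ^ m - C D)) (root (X ^ m - C D) ^ s) =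
      if s = 0 then (m : L) else 0 := by
  let pb := powerBasis' (monic_X_pow_sub_C D (by omega : m ≠ 0))
  have hdim : pb.dim = m := natDegree_X_pow_sub_C
  have hgen : pb.gen ^ pb.dim = algebraMap L _ D := by
    rw [hdim]; exact root_pow_eq_of_X_pow_sub_C D m
  exact (pb.trace_gen_pow_of_pow_dim_eq hgen (by omega)).trans (by rw [hdim])

/-- In `E = L[x]/(x^m − D)`, for `0 ≤ i, j ≤ m − 1` the trace of `a·x^i·x^j` equals `m·a`
if `i = j = 0`, equals `m·a·D` if `i + j = m`, and equals `0` otherwise. -/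
theorem trace_adjoinRoot_gram (L : Type*) [CommRing L] (D : L) (m : ℕ) (hm : 1 ≤ m)
    (a : L) (i j : ℕ) (hi : i ≤ m - 1) (hj : j ≤ m - 1) :
    Algebra.trace L (AdjoinRoot (X ^ m - C D))
      (algebraMap L (AdjoinRoot (X ^ m - C D)) a *
        AdjoinRoot.root (X ^ m - C D) ^ i * AdjoinRoot.root (X ^ m - C D) ^ j) =
    if i = 0 ∧ j = 0 then (m : L) * a
    else if i + j = m then (m : L) * a * D
    else 0 := by
  nontriviality L
  rw [mul_assoc, ← pow_add, ← Algebra.smul_def, map_smul, smul_eq_mul]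
  rcases lt_or_ge (i + j) m with hlt | hge
  · rw [AdjoinRoot.trace_root_pow_of_X_pow_sub_C D hlt]
    split_ifs <;> first | omega | ring
  · obtain ⟨s, hs⟩ := Nat.exists_eq_add_of_le hge
    rw [hs, pow_add, AdjoinRoot.root_pow_eq_of_X_pow_sub_C, ← Algebra.smul_def, map_smul,
      smul_eq_mul, AdjoinRoot.trace_root_pow_of_X_pow_sub_C D (by omega : s < m)]
    split_ifs <;> first | omega | ring
end

section
/- Let L be a field whose characteristic does not divide 2m, let m ≥ 1 be an odd integer, let D, a ∈ L be nonzero, and let E = L[x]/(x^m − D). Then the symmetric L-bilinear form on E given by (u, v) ↦ Tr_{E/L}(m·a·u·v) is isometric to the diagonal form ⟨a⟩ ⊥ ((m−1)/2)·h, i.e. to ⟨a, 1, −1, 1, −1, …, 1, −1⟩ with (m−1)/2 hyperbolic pairs. -/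
/-!
With `r` the class of `x`, the trace of `r ^ t` for `t < 2m` is `m` at `t = 0`, `m D` at `t = m`
and `0` otherwise. Hence for the form `B(u, v) = Tr(m a u v)`, the vector `1/m` has `B = a` and
is orthogonal to all `r ^ p` with `0 < p < m`, while for `1 ≤ p ≤ (m - 1)/2` the powers `r ^ p`
and `r ^ (m - p)` are isotropic with `B(r ^ p, r ^ (m - p)) = m² a D`: they span a hyperbolic
plane, with orthogonal basis `r ^ p ± β r ^ (m - p)` of lengths `±1` for `β = 1/(2 m² a D)`.
These `m` vectors form an orthogonal family of non-isotropic vectors, hence a basis.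
-/

open Polynomial

namespace PowerBasis

variable {K S : Type*} [Field K] [CommRing S] [Algebra K S]

theorem basis_repr_gen_pow_of_lt (pb : PowerBasis K S) {s : ℕ} (hs : s < pb.dim)
    (i : Fin pb.dim) : pb.basis.repr (pb.gen ^ s) i = if (i : ℕ) = s then 1 else 0 := by
  rw [← pb.basis_eq_pow ⟨s, hs⟩, pb.basis.repr_self, Finsupp.single_apply]
  simp [Fin.ext_iff, eq_comm]

theorem trace_gen_pow_of_pos_of_lt (pb : PowerBasis K S) {c : K}
    (hc : pb.gen ^ pb.dim = algebraMap K S c) {t : ℕ} (ht₀ : 0 < t) (ht : t < pb.dim) :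
    Algebra.trace K S (pb.gen ^ t) = 0 := by
  rw [Algebra.trace_eq_matrix_trace pb.basis, Matrix.trace]
  refine Finset.sum_eq_zero fun i _ => ?_
  rw [Matrix.diag_apply, Algebra.leftMulMatrix_eq_repr_mul, pb.basis_eq_pow, ← pow_add]
  by_cases hlt : t + i < pb.dim
  · rw [pb.basis_repr_gen_pow_of_lt hlt, if_neg (by omega)]
  · have hwrap : pb.gen ^ (t + i) = c • pb.gen ^ (t + i - pb.dim) := by
      rw [Algebra.smul_def, ← hc, ← pow_add]
      congr 1
      omega
    rw [hwrap, map_smul, Finsupp.smul_apply, pb.basis_repr_gen_pow_of_lt (by omega),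
      if_neg (by omega), smul_zero]

theorem trace_gen_pow (pb : PowerBasis K S) {c : K}
    (hc : pb.gen ^ pb.dim = algebraMap K S c) {t : ℕ} (ht : t < 2 * pb.dim) :
    Algebra.trace K S (pb.gen ^ t) =
      if t = 0 then (pb.dim : K) else if t = pb.dim then pb.dim * c else 0 := by
  have htrace_one : Algebra.trace K S 1 = pb.dim := by
    rw [← map_one (algebraMap K S), Algebra.trace_algebraMap, pb.finrank, nsmul_one]
  rcases Nat.lt_or_ge t pb.dim with hlt | hge
  · rcases Nat.eq_zero_or_pos t with rfl | hpos
    · simpa using htrace_one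
    · rw [pb.trace_gen_pow_of_pos_of_lt hc hpos hlt, if_neg (by omega), if_neg (by omega)]
  · obtain ⟨s, rfl⟩ := Nat.exists_eq_add_of_le hge
    rw [pow_add, hc, ← Algebra.smul_def, map_smul, smul_eq_mul]
    rcases Nat.eq_zero_or_pos s with rfl | hpos
    · rw [add_zero, pow_zero, htrace_one, if_neg (by omega), if_pos rfl, mul_comm]
    · rw [pb.trace_gen_pow_of_pos_of_lt hc hpos (by omega), if_neg (by omega),
        if_neg (by omega), mul_zero]

end PowerBasis

namespace LinearMap.BilinForm

theorem exists_linearEquiv_apply_eq_sum_of_orthogonal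
    {K V ι : Type*} [Field K] [AddCommGroup V] [Module K V] [Fintype ι] [DecidableEq ι]
    [Nonempty ι] (B : LinearMap.BilinForm K V) (w : ι → V) (g : ι → K)
    (hg : ∀ i, g i ≠ 0)
    (hw : ∀ i j, B (w i) (w j) = if i = j then g i else 0)
    (hcard : Fintype.card ι = Module.finrank K V) :
    ∃ e : (ι → K) ≃ₗ[K] V, ∀ u v, B (e u) (e v) = ∑ i, g i * u i * v i := by
  have hli : LinearIndependent K w :=
    linearIndependent_of_iIsOrtho (iIsOrtho_def.2 fun i j hij => by rw [hw, if_neg hij])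
      (by simpa [hw] using hg)
  let b := basisOfLinearIndependentOfCardEqFinrank hli hcard
  refine ⟨b.equivFun.symm, fun u v => ?_⟩
  simp [b, Module.Basis.equivFun_symm_apply, hw, mul_left_comm, mul_comm]

end LinearMap.BilinForm

section TracePowers

variable {K S : Type*} [Field K] [CommRing S] [Algebra K S] {m : ℕ} {c : K} {r : S}

theorem traceForm_one_add_smul_pow
    (htr : ∀ t < 2 * m, Algebra.trace K S (r ^ t) =
      if t = 0 then (m : K) else if t = m then m * c else 0)
    {q : ℕ} (hq₀ : 0 < q) (hq : q < m) (y : K) :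
    Algebra.traceForm K S 1 (r ^ q + y • r ^ (m - q)) = 0 := by
  rw [Algebra.traceForm_apply, one_mul, map_add, map_smul, htr q (by omega),
    htr (m - q) (by omega), if_neg (by omega), if_neg (by omega), if_neg (by omega),
    if_neg (by omega), smul_zero, add_zero]

theorem traceForm_pow_add_smul_pow
    (htr : ∀ t < 2 * m, Algebra.trace K S (r ^ t) =
      if t = 0 then (m : K) else if t = m then m * c else 0)
    {p q : ℕ} (hp₀ : 0 < p) (hp : 2 * p < m) (hq₀ : 0 < q) (hq : 2 * q < m) (x y : K) :
    Algebra.traceForm K S (r ^ p + x • r ^ (m - p)) (r ^ q + y • r ^ (m - q)) =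
      if p = q then (x + y) * (m * c) else 0 := by
  have hcross : ∀ s t, 0 < s → 2 * s < m → 0 < t → 2 * t < m →
      Algebra.trace K S (r ^ (s + (m - t))) = if s = t then m * c else 0 := by
    intro s t hs₀ hs ht₀ ht
    rw [htr _ (by omega), if_neg (by omega)]
    exact if_congr (by omega) rfl rfl
  have hlow : Algebra.trace K S (r ^ (p + q)) = 0 := by
    rw [htr _ (by omega), if_neg (by omega), if_neg (by omega)]
  have hhigh : Algebra.trace K S (r ^ (m - p + (m - q))) = 0 := by
    rw [htr _ (by omega), if_neg (by omega), if_neg (by omega)]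
  simp only [map_add, map_smul, LinearMap.add_apply, LinearMap.smul_apply,
    Algebra.traceForm_apply, ← pow_add, smul_eq_mul]
  rw [hlow, hhigh, hcross p q hp₀ hp hq₀ hq, add_comm (m - p), hcross q p hq₀ hq hp₀ hp]
  by_cases hpq : p = q
  · simp only [hpq, if_true]
    ring
  · simp only [hpq, Ne.symm hpq, if_false]
    ring

/-- Index `0` gives `1/m`; indices `2p - 1` and `2p` give `r ^ p ± β r ^ (m - p)`. -/
noncomputable def diagonalizingFamily (m : ℕ) (β : K) (r : S) (i : Fin m) : S :=
  if (i : ℕ) = 0 then (m : K)⁻¹ • 1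
  else r ^ (((i : ℕ) + 1) / 2) +
    ((if (i : ℕ) % 2 = 1 then 1 else -1) * β) • r ^ (m - ((i : ℕ) + 1) / 2)

theorem mul_traceForm_diagonalizingFamily
    (htr : ∀ t < 2 * m, Algebra.trace K S (r ^ t) =
      if t = 0 then (m : K) else if t = m then m * c else 0)
    (hodd : Odd m) (h2 : (2 : K) ≠ 0) (hm : (m : K) ≠ 0) (hc : c ≠ 0) {a : K} (ha : a ≠ 0)
    (i j : Fin m) :
    (m * a) * Algebra.traceForm K S (diagonalizingFamily m (2 * (m * a) * (m * c))⁻¹ r i)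
        (diagonalizingFamily m (2 * (m * a) * (m * c))⁻¹ r j) =
      if i = j then (if (i : ℕ) = 0 then a else if (i : ℕ) % 2 = 1 then 1 else -1) else 0 := by
  obtain ⟨k, hk⟩ := hodd
  have hi_lt := i.isLt
  have hj_lt := j.isLt
  have htrace_one : Algebra.trace K S 1 = m := by simpa using htr 0 (by omega)
  have hsymm (x y : S) : Algebra.traceForm K S x y = Algebra.traceForm K S y x := by
    rw [Algebra.traceForm_apply, Algebra.traceForm_apply, mul_comm]
  simp only [diagonalizingFamily]
  by_cases hi : (i : ℕ) = 0 <;> by_cases hj : (j : ℕ) = 0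
  · have hij : i = j := Fin.ext (by omega)
    simp only [hj, hij, if_true, map_smul, LinearMap.smul_apply, Algebra.traceForm_apply,
      mul_one, htrace_one, smul_eq_mul]
    field_simp
  · have hij : i ≠ j := by rintro rfl; exact hj hi
    simp only [hi, hj, hij, if_true, if_false]
    rw [map_smul, LinearMap.smul_apply,
      traceForm_one_add_smul_pow htr (by omega) (by omega), smul_zero, mul_zero]
  · have hij : i ≠ j := by rintro rfl; exact hi hj
    simp only [hi, hj, hij, if_true, if_false]
    rw [hsymm, map_smul, LinearMap.smul_apply,
      traceForm_one_add_smul_pow htr (by omega) (by omega), smul_zero, mul_zero]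
  · simp only [hi, hj, if_false]
    rw [traceForm_pow_add_smul_pow htr (by omega) (by omega) (by omega) (by omega)]
    have hβ : 2 * ((m * a) * (2 * (m * a) * (m * c))⁻¹ * (m * c)) = 1 := by field_simp
    by_cases hij : i = j
    · subst hij
      by_cases hi_odd : (i : ℕ) % 2 = 1
      · simp only [hi_odd, if_true]
        linear_combination hβ
      · simp only [hi_odd, if_true, if_false]
        linear_combination -hβ
    · by_cases hp : ((i : ℕ) + 1) / 2 = ((j : ℕ) + 1) / 2
      · -- `i ≠ j` with the same `p`: the two vectors `r ^ p ± β r ^ (m - p)` of one pair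
        have hij' : (i : ℕ) ≠ j := Fin.val_ne_of_ne hij
        by_cases hi_odd : (i : ℕ) % 2 = 1
        · simp only [hij, hp, hi_odd, show ¬ (j : ℕ) % 2 = 1 by omega, if_true, if_false]
          ring
        · simp only [hij, hp, hi_odd, show (j : ℕ) % 2 = 1 by omega, if_true, if_false]
          ring
      · simp only [hij, hp, if_false, mul_zero]

theorem exists_linearEquiv_mul_traceForm_eq_sum
    (htr : ∀ t < 2 * m, Algebra.trace K S (r ^ t) =
      if t = 0 then (m : K) else if t = m then m * c else 0)
    (hrank : Module.finrank K S = m) (hodd : Odd m) (h2 : (2 : K) ≠ 0) (hm : (m : K) ≠ 0)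
    (hc : c ≠ 0) {a : K} (ha : a ≠ 0) :
    ∃ e : (Fin m → K) ≃ₗ[K] S, ∀ u v : Fin m → K,
      (m * a) * Algebra.traceForm K S (e u) (e v) =
        ∑ i : Fin m,
          (if (i : ℕ) = 0 then a else if (i : ℕ) % 2 = 1 then 1 else -1) * u i * v i := by
  have : Nonempty (Fin m) := ⟨⟨0, hodd.pos⟩⟩
  refine LinearMap.BilinForm.exists_linearEquiv_apply_eq_sum_of_orthogonal
    ((m * a) • Algebra.traceForm K S) _ _ (fun i => ?_)
    (mul_traceForm_diagonalizingFamily htr hodd h2 hm hc ha) (by simp [hrank])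
  split_ifs <;> simp [ha]

end TracePowers

theorem AdjoinRoot.trace_root_X_pow_sub_C_pow {K : Type*} [Field K] {m : ℕ} (hm : m ≠ 0)
    (D : K) {t : ℕ} (ht : t < 2 * m) :
    Algebra.trace K (AdjoinRoot (X ^ m - C D)) (root (X ^ m - C D) ^ t) =
      if t = 0 then (m : K) else if t = m then m * D else 0 := by
  have hf := X_pow_sub_C_ne_zero (Nat.pos_of_ne_zero hm) D
  have hdim : (powerBasis hf).dim = m := by rw [powerBasis_dim, natDegree_X_pow_sub_C]
  have := (powerBasis hf).trace_gen_pow (c := D) ?_ (t := t) (by omega)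
  · rwa [hdim, powerBasis_gen] at this
  · rw [powerBasis_gen, hdim, root_X_pow_sub_C_pow, AdjoinRoot.algebraMap_eq]

theorem AdjoinRoot.finrank_X_pow_sub_C {K : Type*} [Field K] {m : ℕ} (hm : m ≠ 0) (D : K) :
    Module.finrank K (AdjoinRoot (X ^ m - C D)) = m := by
  rw [(powerBasis (X_pow_sub_C_ne_zero (Nat.pos_of_ne_zero hm) D)).finrank, powerBasis_dim,
    natDegree_X_pow_sub_C]

theorem trace_form_scaled_odd_general (L : Type*) [Field L] (m : ℕ) (hodd : Odd m)
    (hchar : ((2 * m : ℕ) : L) ≠ 0) (D a : L) (hD : D ≠ 0) (ha : a ≠ 0) :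
    ∃ e : (Fin m → L) ≃ₗ[L] AdjoinRoot (X ^ m - C D),
      ∀ u v : Fin m → L,
        Algebra.trace L (AdjoinRoot (X ^ m - C D))
            ((m : AdjoinRoot (X ^ m - C D)) *
              algebraMap L (AdjoinRoot (X ^ m - C D)) a * e u * e v) =
        ∑ i : Fin m,
          (if (i : ℕ) = 0 then a else if (i : ℕ) % 2 = 1 then 1 else -1) * u i * v i := by
  have hm : m ≠ 0 := hodd.pos.ne'
  have h2m : (2 : L) * m ≠ 0 := by exact_mod_cast hchar
  obtain ⟨e, he⟩ := exists_linearEquiv_mul_traceForm_eq_sum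
    (fun _ ht => AdjoinRoot.trace_root_X_pow_sub_C_pow hm D ht)
    (AdjoinRoot.finrank_X_pow_sub_C hm D) hodd (left_ne_zero_of_mul h2m)
    (right_ne_zero_of_mul h2m) hD ha
  refine ⟨e, fun u v => ?_⟩
  rw [← he, Algebra.traceForm_apply, mul_assoc _ (e u), ← map_natCast (algebraMap L _),
    ← map_mul, ← Algebra.smul_def, map_smul, smul_eq_mul]

/-- For `m` odd, `char L ∤ 2m`, and `D, a ∈ Lˣ`, the bilinear form
`(u, v) ↦ Tr_{E/L}(m·a·u·v)` on `E = L[x]/(x^m − D)` is isometric to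
`⟨a⟩ ⊥ ((m−1)/2)·h`, i.e. to the diagonal form `⟨a, 1, −1, …, 1, −1⟩`. -/
theorem trace_form_scaled_odd (L : Type*) [Field L] (m : ℕ) (hm : 1 ≤ m) (hodd : Odd m)
    (hchar : ((2 * m : ℕ) : L) ≠ 0) (D a : L) (hD : D ≠ 0) (ha : a ≠ 0) :
    ∃ e : (Fin m → L) ≃ₗ[L] AdjoinRoot (X ^ m - C D),
      ∀ u v : Fin m → L,
        Algebra.trace L (AdjoinRoot (X ^ m - C D))
            ((m : AdjoinRoot (X ^ m - C D)) *
              algebraMap L (AdjoinRoot (X ^ m - C D)) a * e u * e v) =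
        ∑ i : Fin m,
          (if (i : ℕ) = 0 then a else if (i : ℕ) % 2 = 1 then 1 else -1) * u i * v i :=
  trace_form_scaled_odd_general L m hodd hchar D a hD ha
end

section
/- Let L be a field whose characteristic does not divide 2m, let m ≥ 2 be an even integer, let D, a ∈ L be nonzero, and let E = L[x]/(x^m − D). Then the symmetric L-bilinear form on E given by (u, v) ↦ Tr_{E/L}(m·a·u·v) is isometric to ⟨a⟩ ⊥ ⟨a·D⟩ ⊥ ((m−2)/2)·h. -/
/-! Writing `θ` for the class of `x`, `Tr(θ^k) = m·D^(k/m)` if `m ∣ k` and `0` otherwise.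
Hence the form `(u, v) ↦ Tr(m·a·u·v)` pairs `θ^p` only with `θ^(m-p)`: the vectors `1` and
`θ^(m/2)` have lengths `m²a` and `m²aD`, and for `0 < k < m/2` the monomials `θ^k`, `θ^(m-k)`
span a hyperbolic plane. Rescaling `1` and `θ^(m/2)` by `1/m`, and replacing each such pair by
`θ^k ± θ^(m-k)/(2m²aD)`, gives an orthogonal basis with lengths `a, aD, 1, -1, …, 1, -1`. -/

open Polynomial

theorem LinearMap.BilinForm.exists_linearEquiv_of_gram_eq_diagonal {K V ι : Type*} [Field K]
    [AddCommGroup V] [Module K V] [FiniteDimensional K V] [Fintype ι] [DecidableEq ι]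
    (B : LinearMap.BilinForm K V) (w : ι → V) (c : ι → K) (hc : ∀ i, c i ≠ 0)
    (hw : ∀ i j, B (w i) (w j) = if i = j then c i else 0)
    (hcard : Fintype.card ι = Module.finrank K V) :
    ∃ e : (ι → K) ≃ₗ[K] V, ∀ u v, B (e u) (e v) = ∑ i, c i * u i * v i := by
  have hli : LinearIndependent K w :=
    B.linearIndependent_of_iIsOrtho (iIsOrtho_def.2 fun i j hij => by simp [hw, hij])
      (fun i => by simpa [hw] using hc i)
  refine ⟨(basisOfLinearIndependentOfCardEqFinrank' w hli hcard).equivFun.symm, fun u v => ?_⟩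
  simp [Module.Basis.equivFun_symm_apply, hw, mul_comm, mul_left_comm]

namespace AdjoinRoot

variable {R : Type*} [CommRing R] {m : ℕ} (D : R)

theorem root_X_pow_sub_C_pow_eq_smul (n : ℕ) :
    root (X ^ m - C D) ^ n = D ^ (n / m) • root (X ^ m - C D) ^ (n % m) := by
  have hroot : root (X ^ m - C D) ^ m = of _ D := by
    rw [← sub_eq_zero, ← eval₂_root (X ^ m - C D), eval₂_sub, eval₂_C, eval₂_pow, eval₂_X]
  conv_lhs => rw [← Nat.div_add_mod n m]
  rw [pow_add, pow_mul, hroot, ← map_pow, Algebra.smul_def, algebraMap_eq]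

theorem trace_root_X_pow_sub_C_pow_s3 [Nontrivial R] (hm : 0 < m) (k : ℕ) :
    Algebra.trace R (AdjoinRoot (X ^ m - C D)) (root (X ^ m - C D) ^ k) =
      if m ∣ k then m * D ^ (k / m) else 0 := by
  set pb := powerBasis' (monic_X_pow_sub_C D hm.ne')
  have hdim : pb.dim = m := natDegree_X_pow_sub_C
  have hdiag : ∀ i : Fin pb.dim,
      Algebra.leftMulMatrix pb.basis (root (X ^ m - C D) ^ k) i i =
        if m ∣ k then D ^ (k / m) else 0 := by
    intro i
    have hi : (i : ℕ) < m := by have := i.isLt; omega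
    rw [Algebra.leftMulMatrix_eq_repr_mul, pb.basis_eq_pow]
    change pb.basis.repr (root (X ^ m - C D) ^ k * root (X ^ m - C D) ^ (i : ℕ)) i = _
    have hmod : (k + i) % m < pb.dim := by have := Nat.mod_lt (k + i) hm; omega
    rw [← pow_add, root_X_pow_sub_C_pow_eq_smul, map_smul,
      show root (X ^ m - C D) ^ ((k + i) % m) = pb.basis ⟨_, hmod⟩ by
        simp [pb.basis_eq_pow, pb],
      pb.basis.repr_self, Finsupp.smul_apply, Finsupp.single_apply]
    simp only [Fin.ext_iff, smul_eq_mul, mul_ite, mul_one, mul_zero]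
    by_cases hk : m ∣ k
    · obtain ⟨t, rfl⟩ := hk
      simp [Nat.mul_add_div hm, Nat.mul_div_cancel_left t hm, Nat.mod_eq_of_lt hi,
        Nat.div_eq_of_lt hi]
    · have hne : (k + i) % m ≠ i := fun h => hk <| Nat.modEq_zero_iff_dvd.1 <|
        Nat.ModEq.add_right_cancel' i <| by simpa [Nat.ModEq, Nat.mod_eq_of_lt hi] using h
      simp [hk, hne]
  rw [Algebra.trace_eq_matrix_trace pb.basis, Matrix.trace]
  simp only [Matrix.diag_apply, hdiag]
  simp [hdim]

end AdjoinRoot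

open AdjoinRoot

noncomputable def scaledTraceForm (R : Type*) {S : Type*} [CommRing R] [CommRing S] [Algebra R S]
    (c : S) : LinearMap.BilinForm R S :=
  (Algebra.traceForm R S).compLeft (LinearMap.mulLeft R c)

@[simp]
theorem scaledTraceForm_apply {R S : Type*} [CommRing R] [CommRing S] [Algebra R S]
    (c u v : S) :
    scaledTraceForm R c u v = Algebra.trace R S (c * u * v) := by
  simp [scaledTraceForm, Algebra.traceForm_apply, mul_assoc]

section EvenTraceForm

variable {L : Type*} [Field L] {m : ℕ} (D a : L)

local notation "E" => AdjoinRoot (X ^ m - C D)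
local notation "θ" => root (X ^ m - C D)

theorem scaledTraceForm_root_pow (hm : 0 < m) {p q : ℕ} (hpq : p + q < 2 * m) :
    scaledTraceForm L ((m : E) * algebraMap L E a) (θ ^ p) (θ ^ q) =
      if p + q = 0 then m ^ 2 * a else if p + q = m then m ^ 2 * a * D else 0 := by
  have hdvd : m ∣ p + q ↔ p + q = 0 ∨ p + q = m := by
    constructor
    · rintro ⟨t, ht⟩
      have : t < 2 := by nlinarith
      interval_cases t <;> simp [ht]
    · rintro (h | h) <;> simp [h]
  rw [scaledTraceForm_apply, mul_assoc, ← pow_add, ← map_natCast (algebraMap L E), ← map_mul,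
    ← Algebra.smul_def, map_smul, trace_root_X_pow_sub_C_pow_s3 D hm, smul_eq_mul]
  by_cases h0 : p + q = 0
  · rw [if_pos (h0 ▸ dvd_zero m), if_pos h0, h0, Nat.zero_div, pow_zero]
    ring
  by_cases hm' : p + q = m
  · rw [if_pos (hm' ▸ dvd_refl m), if_neg h0, if_pos hm', hm', Nat.div_self hm, pow_one]
    ring
  · rw [if_neg (by rw [hdvd]; tauto), if_neg h0, if_neg hm', mul_zero]

noncomputable def evenDiagCoeff (i : ℕ) : L :=
  if i = 0 then a else if i = 1 then a * D else if i % 2 = 0 then 1 else -1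

theorem evenDiagCoeff_ne_zero (hD : D ≠ 0) (ha : a ≠ 0) (i : ℕ) : evenDiagCoeff D a i ≠ 0 := by
  unfold evenDiagCoeff
  split_ifs <;> simp [ha, hD]

noncomputable def evenDiagVec (i : ℕ) : E :=
  if i = 0 then (m : L)⁻¹ • 1
  else if i = 1 then (m : L)⁻¹ • θ ^ (m / 2)
  else θ ^ (i / 2) + ((if i % 2 = 0 then 1 else -1) * (2 * m ^ 2 * a * D)⁻¹) • θ ^ (m - i / 2)

theorem scaledTraceForm_evenDiagVec (hm : (m : L) ≠ 0) (h2 : (2 : L) ≠ 0) (heven : Even m)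
    (hD : D ≠ 0) (ha : a ≠ 0) {i j : ℕ} (hi : i < m) (hj : j < m) :
    scaledTraceForm L ((m : E) * algebraMap L E a) (evenDiagVec D a i) (evenDiagVec D a j) =
      if i = j then evenDiagCoeff D a i else 0 := by
  have hm0 : 0 < m := Nat.pos_of_ne_zero (by rintro rfl; simp at hm)
  have hm2 : m % 2 = 0 := Nat.even_iff.mp heven
  simp only [evenDiagVec, evenDiagCoeff, ← pow_zero θ]
  rcases (show i = 0 ∨ i = 1 ∨ 2 ≤ i by omega) with rfl | rfl | hi2 <;>
  rcases (show j = 0 ∨ j = 1 ∨ 2 ≤ j by omega) with rfl | rfl | hj2 <;>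
  simp (disch := omega) only [if_pos, if_neg, ↓reduceIte, map_add, map_smul, LinearMap.add_apply,
    LinearMap.smul_apply, smul_eq_mul, scaledTraceForm_root_pow D a hm0, mul_zero, zero_add,
    add_zero]
  case inr.inr.inr.inr =>
    -- only the cross terms `θ^(i/2) · θ^(m - j/2)` and `θ^(m - i/2) · θ^(j/2)` can pair
    by_cases hk : i / 2 = j / 2
    · rcases Nat.mod_two_eq_zero_or_one i with hpi | hpi <;>
      rcases Nat.mod_two_eq_zero_or_one j with hpj | hpj <;>
      simp (disch := omega) only [if_pos, if_neg] <;>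
      field_simp <;> ring
    · simp (disch := omega) only [if_neg, mul_zero, add_zero]
  all_goals field_simp

end EvenTraceForm

theorem trace_form_scaled_even_general (L : Type*) [Field L] (m : ℕ) (heven : Even m)
    (hchar : ((2 * m : ℕ) : L) ≠ 0) (D a : L) (hD : D ≠ 0) (ha : a ≠ 0) :
    ∃ e : (Fin m → L) ≃ₗ[L] AdjoinRoot (X ^ m - C D),
      ∀ u v : Fin m → L,
        Algebra.trace L (AdjoinRoot (X ^ m - C D))
            ((m : AdjoinRoot (X ^ m - C D)) *
              algebraMap L (AdjoinRoot (X ^ m - C D)) a * e u * e v) =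
        ∑ i : Fin m,
          (if (i : ℕ) = 0 then a
            else if (i : ℕ) = 1 then a * D
            else if (i : ℕ) % 2 = 0 then 1 else -1) * u i * v i := by
  have h2m : (2 : L) * m ≠ 0 := by exact_mod_cast hchar
  have hm0 : 0 < m := Nat.pos_of_ne_zero (by rintro rfl; simp at h2m)
  have hmonic := monic_X_pow_sub_C D hm0.ne'
  have : FiniteDimensional L (AdjoinRoot (X ^ m - C D)) := (powerBasis' hmonic).finite
  obtain ⟨e, he⟩ := LinearMap.BilinForm.exists_linearEquiv_of_gram_eq_diagonal
    (scaledTraceForm L ((m : AdjoinRoot (X ^ m - C D)) * algebraMap L _ a))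
    (fun i : Fin m => evenDiagVec D a i) (fun i => evenDiagCoeff D a i)
    (fun i => evenDiagCoeff_ne_zero D a hD ha i)
    (fun i j => by
      simpa only [Fin.val_inj] using scaledTraceForm_evenDiagVec D a (right_ne_zero_of_mul h2m)
        (left_ne_zero_of_mul h2m) heven hD ha i.isLt j.isLt)
    (by rw [Fintype.card_fin, (powerBasis' hmonic).finrank, powerBasis'_dim,
      natDegree_X_pow_sub_C])
  exact ⟨e, fun u v => by simpa only [scaledTraceForm_apply, evenDiagCoeff] using he u v⟩

/-- For `m` even, `char L ∤ 2m`, and `D, a ∈ Lˣ`, the bilinear form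
`(u, v) ↦ Tr_{E/L}(m·a·u·v)` on `E = L[x]/(x^m − D)` is isometric to
`⟨a⟩ ⊥ ⟨a·D⟩ ⊥ ((m−2)/2)·h`, i.e. to the diagonal form `⟨a, a·D, 1, −1, …, 1, −1⟩`. -/
theorem trace_form_scaled_even (L : Type*) [Field L] (m : ℕ) (hm : 2 ≤ m) (heven : Even m)
    (hchar : ((2 * m : ℕ) : L) ≠ 0) (D a : L) (hD : D ≠ 0) (ha : a ≠ 0) :
    ∃ e : (Fin m → L) ≃ₗ[L] AdjoinRoot (X ^ m - C D),
      ∀ u v : Fin m → L,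
        Algebra.trace L (AdjoinRoot (X ^ m - C D))
            ((m : AdjoinRoot (X ^ m - C D)) *
              algebraMap L (AdjoinRoot (X ^ m - C D)) a * e u * e v) =
        ∑ i : Fin m,
          (if (i : ℕ) = 0 then a
            else if (i : ℕ) = 1 then a * D
            else if (i : ℕ) % 2 = 0 then 1 else -1) * u i * v i :=
  trace_form_scaled_even_general L m heven hchar D a hD ha
end

section
/- Let L be a field whose characteristic does not divide 2m, let m ≥ 1 be an odd integer, let D, a ∈ L be nonzero, and let E = L[x]/(x^m − D). Then the symmetric L-bilinear form on E given by (u, v) ↦ Tr_{E/L}(m·a·x·u·v) is isometric to ⟨a·D⟩ ⊥ ((m−1)/2)·h. -/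
open Polynomial Module

/-!
Write `m = 2p + 1` and let `x` be the root. Since `x ^ m = D`, the trace of `x ^ n` is `m D^(n/m)`
when `m ∣ n` and `0` otherwise, so on the monomials `1, x, …, x ^ 2p` the form
`(u, v) ↦ Tr(m a x u v)` has Gram matrix `m² a D` times the anti-identity. The middle monomial,
scaled to `m⁻¹ x ^ p`, contributes `⟨a D⟩`, and each pair `x ^ k, x ^ (2p - k)` with `k < p` spans a
hyperbolic plane, diagonalised as `⟨1, -1⟩` by `(2 m² a D)⁻¹ x ^ k ± x ^ (2p - k)`.
-/

namespace PowerBasis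

variable {R A : Type*} [CommRing R] [CommRing A] [Algebra R A] [Nontrivial A]
  (pb : PowerBasis R A) {D : R}

theorem gen_pow_eq_smul_basis (hgen : pb.gen ^ pb.dim = algebraMap R A D) (n : ℕ) :
    pb.gen ^ n = D ^ (n / pb.dim) • pb.basis ⟨n % pb.dim, Nat.mod_lt _ pb.dim_pos⟩ := by
  conv_lhs => rw [← Nat.div_add_mod n pb.dim]
  rw [pow_add, pow_mul, hgen, ← map_pow, ← Algebra.smul_def, pb.coe_basis]

theorem trace_gen_pow_s4 (hgen : pb.gen ^ pb.dim = algebraMap R A D) (n : ℕ) :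
    Algebra.trace R A (pb.gen ^ n) = if pb.dim ∣ n then pb.dim * D ^ (n / pb.dim) else 0 := by
  classical
  have hdiag (i : Fin pb.dim) : pb.basis.repr (pb.gen ^ n * pb.basis i) i =
      if pb.dim ∣ n then D ^ (n / pb.dim) else 0 := by
    have hmod : (n + i) % pb.dim = i ↔ pb.dim ∣ n := by
      rw [← Nat.add_modEq_right_iff, Nat.ModEq, Nat.mod_eq_of_lt i.is_lt]
    rw [pb.coe_basis, ← pow_add, gen_pow_eq_smul_basis pb hgen (n + i)]
    simp only [map_smul, Module.Basis.repr_self, Finsupp.smul_apply, Finsupp.single_apply,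
      Fin.ext_iff, hmod]
    split_ifs with hdvd
    · rw [Nat.add_div_of_dvd_right hdvd, Nat.div_eq_of_lt i.is_lt, add_zero, smul_eq_mul, mul_one]
    · exact smul_zero _
  rw [Algebra.trace_eq_matrix_trace pb.basis, Matrix.trace]
  simp only [Matrix.diag_apply, Algebra.leftMulMatrix_eq_repr_mul, hdiag]
  split_ifs <;> simp

end PowerBasis

namespace Algebra

variable (R S : Type*) [CommRing R] [CommRing S] [Algebra R S]

noncomputable def scaledTraceForm (c : S) : LinearMap.BilinForm R S :=
  (traceForm R S).compl₁₂ (LinearMap.mulLeft R c) LinearMap.id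

theorem scaledTraceForm_apply (c x y : S) :
    scaledTraceForm R S c x y = trace R S (c * x * y) :=
  rfl

end Algebra

namespace LinearMap.BilinForm

section CommRing

variable {R M : Type*} [CommRing R] [AddCommGroup M] [Module R M]

def HasAntidiagonalGram (B : LinearMap.BilinForm R M) (w : ℕ → M) (p : ℕ) (c : R) : Prop :=
  ∀ k l, k ≤ 2 * p → l ≤ 2 * p → B (w k) (w l) = if k + l = 2 * p then c else 0

end CommRing

variable {K V : Type*} [Field K] [AddCommGroup V] [Module K V]

theorem exists_linearEquiv_eq_sum_of_iIsOrtho [FiniteDimensional K V] {ι : Type*} [Fintype ι]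
    (B : LinearMap.BilinForm K V) {b : ι → V} (hortho : B.iIsOrtho b)
    (hb : ∀ i, B (b i) (b i) ≠ 0) (hcard : Fintype.card ι = finrank K V) :
    ∃ e : (ι → K) ≃ₗ[K] V, ∀ u v : ι → K, B (e u) (e v) = ∑ i, B (b i) (b i) * u i * v i := by
  let basis := basisOfLinearIndependentOfCardEqFinrank' b
    (linearIndependent_of_iIsOrtho hortho hb) hcard
  refine ⟨basis.equivFun.symm, fun u v => ?_⟩
  simp only [Module.Basis.equivFun_symm_apply, basis, coe_basisOfLinearIndependentOfCardEqFinrank',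
    map_sum, map_smul, LinearMap.sum_apply, LinearMap.smul_apply, smul_eq_mul]
  refine Finset.sum_congr rfl fun i _ => ?_
  rw [Finset.sum_eq_single i (fun j _ hji => by rw [iIsOrtho_def.1 hortho j i hji]; simp)
    (by simp)]
  ring

noncomputable def antidiagonalOrthoFamily (w : ℕ → V) (p : ℕ) (c s : K) : Fin (2 * p + 1) → V :=
  fun i => if (i : ℕ) = 0 then s • w p
    else (2 * c)⁻¹ • w ((i - 1) / 2) +
      (if (i : ℕ) % 2 = 1 then 1 else -1 : K) • w (2 * p - (i - 1) / 2)

variable {B : LinearMap.BilinForm K V} {p : ℕ} {w : ℕ → V} {c : K}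

theorem HasAntidiagonalGram.apply_hyperbolic_hyperbolic (hw : B.HasAntidiagonalGram w p c)
    (hc : c ≠ 0) (h2 : (2 : K) ≠ 0) {k l : ℕ} (hk : k < p) (hl : l < p) (ε δ : K) :
    B ((2 * c)⁻¹ • w k + ε • w (2 * p - k)) ((2 * c)⁻¹ • w l + δ • w (2 * p - l)) =
      if k = l then (ε + δ) / 2 else 0 := by
  simp only [map_add, map_smul, LinearMap.add_apply, LinearMap.smul_apply, smul_eq_mul]
  rw [hw k l (by omega) (by omega), hw k (2 * p - l) (by omega) (by omega),
    hw (2 * p - k) l (by omega) (by omega), hw (2 * p - k) (2 * p - l) (by omega) (by omega)]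
  by_cases hkl : k = l
  · subst hkl
    simp only [if_pos (show k + (2 * p - k) = 2 * p by omega),
      if_pos (show 2 * p - k + k = 2 * p by omega), if_neg (show k + k ≠ 2 * p by omega),
      if_neg (show 2 * p - k + (2 * p - k) ≠ 2 * p by omega), if_true]
    field_simp
    ring
  · simp only [if_neg (show k + (2 * p - l) ≠ 2 * p by omega),
      if_neg (show 2 * p - k + l ≠ 2 * p by omega), if_neg (show k + l ≠ 2 * p by omega),
      if_neg (show 2 * p - k + (2 * p - l) ≠ 2 * p by omega), if_neg hkl]
    ring

theorem HasAntidiagonalGram.apply_middle_hyperbolic (hw : B.HasAntidiagonalGram w p c)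
    {l : ℕ} (hl : l < p) (γ δ : K) :
    B (w p) (γ • w l + δ • w (2 * p - l)) = 0 ∧ B (γ • w l + δ • w (2 * p - l)) (w p) = 0 := by
  simp only [map_add, map_smul, LinearMap.add_apply, LinearMap.smul_apply, smul_eq_mul]
  rw [hw p l (by omega) (by omega), hw p (2 * p - l) (by omega) (by omega),
    hw l p (by omega) (by omega), hw (2 * p - l) p (by omega) (by omega),
    if_neg (by omega), if_neg (by omega), if_neg (by omega), if_neg (by omega)]
  simp

theorem HasAntidiagonalGram.apply_antidiagonalOrthoFamily (hw : B.HasAntidiagonalGram w p c)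
    (hc : c ≠ 0) (h2 : (2 : K) ≠ 0) (s : K) (i j : Fin (2 * p + 1)) :
    B (antidiagonalOrthoFamily w p c s i) (antidiagonalOrthoFamily w p c s j) =
      if i = j then (if (i : ℕ) = 0 then s ^ 2 * c else if (i : ℕ) % 2 = 1 then 1 else -1)
      else 0 := by
  have hi := i.is_lt
  have hj := j.is_lt
  unfold antidiagonalOrthoFamily
  by_cases hi0 : (i : ℕ) = 0 <;> by_cases hj0 : (j : ℕ) = 0
  · have hij : i = j := Fin.ext (by omega)
    simp only [hi0, hj0, if_pos hij, if_true, map_smul, LinearMap.smul_apply, smul_eq_mul,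
      hw p p (by omega) (by omega), if_pos (two_mul p).symm]
    ring
  · have hij : i ≠ j := fun h => hj0 (h ▸ hi0)
    simp only [hi0, hj0, if_neg hij, if_true, if_false, map_smul, LinearMap.smul_apply,
      (hw.apply_middle_hyperbolic (show (j - 1) / 2 < p by omega) _ _).1, smul_zero]
  · have hij : i ≠ j := fun h => hi0 (h ▸ hj0)
    simp only [hi0, hj0, if_neg hij, if_true, if_false, map_smul,
      (hw.apply_middle_hyperbolic (show (i - 1) / 2 < p by omega) _ _).2, smul_zero]
  · simp only [hi0, hj0, if_false, hw.apply_hyperbolic_hyperbolic hc h2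
      (show (i - 1) / 2 < p by omega) (show (j - 1) / 2 < p by omega)]
    by_cases hkl : ((i : ℕ) - 1) / 2 = ((j : ℕ) - 1) / 2
    · rw [if_pos hkl]
      by_cases hpi : (i : ℕ) % 2 = 1 <;> by_cases hpj : (j : ℕ) % 2 = 1
      · rw [if_pos (Fin.ext (by omega)), if_pos hpi, if_pos hpj]; field_simp; norm_num
      · rw [if_neg (fun h : i = j => hpj (h ▸ hpi)), if_pos hpi, if_neg hpj]; ring
      · rw [if_neg (fun h : i = j => hpi (h ▸ hpj)), if_neg hpi, if_pos hpj]; ring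
      · rw [if_pos (Fin.ext (by omega)), if_neg hpi, if_neg hpj]; field_simp; norm_num
    · rw [if_neg hkl, if_neg (fun h : i = j => hkl (h ▸ rfl))]

theorem HasAntidiagonalGram.exists_linearEquiv [FiniteDimensional K V]
    (hw : B.HasAntidiagonalGram w p c) (hc : c ≠ 0) (h2 : (2 : K) ≠ 0) {s : K} (hs : s ≠ 0)
    (hdim : finrank K V = 2 * p + 1) :
    ∃ e : (Fin (2 * p + 1) → K) ≃ₗ[K] V, ∀ u v : Fin (2 * p + 1) → K, B (e u) (e v) =
      ∑ i : Fin (2 * p + 1),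
        (if (i : ℕ) = 0 then s ^ 2 * c else if (i : ℕ) % 2 = 1 then 1 else -1) * u i * v i := by
  have hgram := hw.apply_antidiagonalOrthoFamily hc h2 s
  have hortho : B.iIsOrtho (antidiagonalOrthoFamily w p c s) :=
    iIsOrtho_def.2 fun i j hij => by rw [hgram, if_neg hij]
  have hb (i) : B (antidiagonalOrthoFamily w p c s i) (antidiagonalOrthoFamily w p c s i) ≠ 0 := by
    rw [hgram, if_pos rfl]
    split_ifs <;> simp [hs, hc]
  obtain ⟨e, he⟩ := B.exists_linearEquiv_eq_sum_of_iIsOrtho hortho hb (by simp [hdim])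
  exact ⟨e, fun u v => (he u v).trans (by simp only [hgram, if_true])⟩

end LinearMap.BilinForm

namespace AdjoinRoot

variable {R : Type*} [CommRing R] [IsDomain R]

theorem trace_root_pow_X_pow_sub_C {m : ℕ} (hm : m ≠ 0) (D : R) (n : ℕ) :
    Algebra.trace R (AdjoinRoot (X ^ m - C D)) (root (X ^ m - C D) ^ n) =
      if m ∣ n then m * D ^ (n / m) else 0 := by
  have hmonic := monic_X_pow_sub_C D hm
  have : Nontrivial (AdjoinRoot (X ^ m - C D)) :=
    AdjoinRoot.nontrivial _ (by rw [degree_X_pow_sub_C (Nat.pos_of_ne_zero hm)]; exact_mod_cast hm)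
  have hdim : (powerBasis' hmonic).dim = m := natDegree_X_pow_sub_C
  have htrace := (powerBasis' hmonic).trace_gen_pow_s4 (D := D) (by
    rw [hdim, powerBasis'_gen, algebraMap_eq, ← sub_eq_zero, ← eval₂_root (X ^ m - C D), eval₂_sub,
      eval₂_C, eval₂_pow, eval₂_X]) n
  rwa [hdim] at htrace

theorem hasAntidiagonalGram_scaledTraceForm_root_pow (p : ℕ) (D c : R) :
    (Algebra.scaledTraceForm R (AdjoinRoot (X ^ (2 * p + 1) - C D))
      (algebraMap R _ c * root (X ^ (2 * p + 1) - C D))).HasAntidiagonalGram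
      (root (X ^ (2 * p + 1) - C D) ^ ·) p (c * (2 * p + 1 : ℕ) * D) := by
  intro k l hk hl
  rw [Algebra.scaledTraceForm_apply, mul_assoc, mul_assoc, ← pow_add, ← pow_succ',
    ← Algebra.smul_def, map_smul, trace_root_pow_X_pow_sub_C (by omega), smul_eq_mul]
  by_cases hkl : k + l = 2 * p
  · rw [if_pos hkl, show k + l + 1 = 2 * p + 1 by omega, if_pos dvd_rfl,
      Nat.div_self (by omega), pow_one, mul_assoc]
  · have hndvd : ¬ 2 * p + 1 ∣ k + l + 1 := fun hdvd =>
      hkl (by have := Nat.eq_of_dvd_of_lt_two_mul (by omega) hdvd (by omega); omega)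
    rw [if_neg hkl, if_neg hndvd, mul_zero]

end AdjoinRoot

theorem trace_form_scaled_root_odd_general (L : Type*) [Field L] (m : ℕ) (hodd : Odd m)
    (hchar : ((2 * m : ℕ) : L) ≠ 0) (D a : L) (hD : D ≠ 0) (ha : a ≠ 0) :
    ∃ e : (Fin m → L) ≃ₗ[L] AdjoinRoot (X ^ m - C D),
      ∀ u v : Fin m → L,
        Algebra.trace L (AdjoinRoot (X ^ m - C D))
            ((m : AdjoinRoot (X ^ m - C D)) *
              algebraMap L (AdjoinRoot (X ^ m - C D)) a *
              AdjoinRoot.root (X ^ m - C D) * e u * e v) =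
        ∑ i : Fin m,
          (if (i : ℕ) = 0 then a * D else if (i : ℕ) % 2 = 1 then 1 else -1) * u i * v i := by
  obtain ⟨p, rfl⟩ := hodd
  have h2 : (2 : L) ≠ 0 := fun h => hchar (by push_cast; rw [h, zero_mul])
  have hm : ((2 * p + 1 : ℕ) : L) ≠ 0 := fun h => hchar (by push_cast at h ⊢; rw [h, mul_zero])
  have hmonic := monic_X_pow_sub_C D (n := 2 * p + 1) (by omega)
  have := hmonic.finite_adjoinRoot
  have hw := AdjoinRoot.hasAntidiagonalGram_scaledTraceForm_root_pow p D ((2 * p + 1 : ℕ) * a)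
  obtain ⟨e, he⟩ := hw.exists_linearEquiv (by positivity) h2 (inv_ne_zero hm)
    (by rw [(AdjoinRoot.powerBasis' hmonic).finrank, AdjoinRoot.powerBasis'_dim,
      natDegree_X_pow_sub_C])
  have hscale : (((2 * p + 1 : ℕ) : L)⁻¹) ^ 2 * ((2 * p + 1 : ℕ) * a * (2 * p + 1 : ℕ) * D) =
      a * D := by
    field_simp
  refine ⟨e, fun u v => ?_⟩
  rw [← hscale, ← he, Algebra.scaledTraceForm_apply, map_mul (algebraMap L _), map_natCast]

/-- For `m` odd, `char L ∤ 2m`, and `D, a ∈ Lˣ`, the bilinear form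
`(u, v) ↦ Tr_{E/L}(m·a·x·u·v)` on `E = L[x]/(x^m − D)` is isometric to
`⟨a·D⟩ ⊥ ((m−1)/2)·h`, i.e. to the diagonal form `⟨a·D, 1, −1, …, 1, −1⟩`. -/
theorem trace_form_scaled_root_odd (L : Type*) [Field L] (m : ℕ) (hm : 1 ≤ m) (hodd : Odd m)
    (hchar : ((2 * m : ℕ) : L) ≠ 0) (D a : L) (hD : D ≠ 0) (ha : a ≠ 0) :
    ∃ e : (Fin m → L) ≃ₗ[L] AdjoinRoot (X ^ m - C D),
      ∀ u v : Fin m → L,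
        Algebra.trace L (AdjoinRoot (X ^ m - C D))
            ((m : AdjoinRoot (X ^ m - C D)) *
              algebraMap L (AdjoinRoot (X ^ m - C D)) a *
              AdjoinRoot.root (X ^ m - C D) * e u * e v) =
        ∑ i : Fin m,
          (if (i : ℕ) = 0 then a * D else if (i : ℕ) % 2 = 1 then 1 else -1) * u i * v i :=
  trace_form_scaled_root_odd_general L m hodd hchar D a hD ha
end

section
/- Let L be a field whose characteristic does not divide 2m, let m ≥ 2 be an even integer, let D, a ∈ L be nonzero, and let E = L[x]/(x^m − D). Then the symmetric L-bilinear form on E given by (u, v) ↦ Tr_{E/L}(m·a·x·u·v) is isometric to (m/2)·h, i.e. to the diagonal form ⟨1, −1, 1, −1, …, 1, −1⟩ with m/2 hyperbolic pairs. -/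
/-! Since `x^m = D`, the trace of `x^t` vanishes for `0 < t < 2m` except at `t = m`, where it is
`mD`; so in the basis `1, x, …, x^{m-1}` the form `(u, v) ↦ Tr(m a x u v)` has `c = m²aD` times
the antidiagonal matrix as Gram matrix. As `m` is even, the pairs `(c⁻¹ x^k, x^{m-1-k})`,
`2k < m`, are mutually orthogonal hyperbolic pairs, and the vectors `c⁻¹ x^k ± ½ x^{m-1-k}`
form an orthogonal basis on which the form takes the values `±1`. -/

open Polynomial

def altSign (K : Type*) [Ring K] (i : ℕ) : K := if i % 2 = 0 then 1 else -1

theorem altSign_ne_zero (K : Type*) [Ring K] [Nontrivial K] (i : ℕ) : altSign K i ≠ 0 := by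
  unfold altSign
  split_ifs <;> simp

namespace AdjoinRoot

variable {R : Type*} [CommRing R] {m : ℕ} (D : R)

theorem root_X_pow_sub_C_pow : root (X ^ m - C D) ^ m = of (X ^ m - C D) D := by
  have h := eval₂_root (X ^ m - C D)
  rwa [eval₂_sub, eval₂_X_pow, eval₂_C, sub_eq_zero] at h

theorem root_X_pow_sub_C_pow_add (t : ℕ) :
    root (X ^ m - C D) ^ (m + t) = D • root (X ^ m - C D) ^ t := by
  rw [pow_add, root_X_pow_sub_C_pow, Algebra.smul_def]
  rfl

variable [Nontrivial R]

theorem trace_root_X_pow_sub_C_pow_of_lt (hm : m ≠ 0) {t : ℕ} (ht : t < m) :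
    Algebra.trace R (AdjoinRoot (X ^ m - C D)) (root (X ^ m - C D) ^ t) =
      if t = 0 then (m : R) else 0 := by
  classical
  set pb := powerBasis' (monic_X_pow_sub_C D hm)
  have hdim : pb.dim = m := natDegree_X_pow_sub_C
  have repr_pow : ∀ s (hs : s < pb.dim),
      pb.basis.repr (root (X ^ m - C D) ^ s) = Finsupp.single ⟨s, hs⟩ 1 := by
    intro s hs
    rw [← pb.basis.repr_self, pb.basis_eq_pow, powerBasis'_gen]
  have hdiag : ∀ i : Fin pb.dim,
      pb.basis.repr (root (X ^ m - C D) ^ t * pb.basis i) i = if t = 0 then 1 else 0 := by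
    intro i
    rw [pb.basis_eq_pow, powerBasis'_gen, ← pow_add]
    rcases lt_or_ge (t + i) pb.dim with h | h
    · rw [repr_pow _ h, Finsupp.single_apply]
      simp [Fin.ext_iff]
    · obtain ⟨s, hs⟩ : ∃ s, t + i = m + s := ⟨t + i - m, by omega⟩
      rw [hs, root_X_pow_sub_C_pow_add, map_smul, repr_pow s (by omega), Finsupp.smul_apply,
        Finsupp.single_apply, if_neg (by simp [Fin.ext_iff]; omega), if_neg (by omega), smul_zero]
  rw [Algebra.trace_eq_matrix_trace pb.basis, Matrix.trace]
  simp only [Matrix.diag_apply, Algebra.leftMulMatrix_eq_repr_mul, hdiag]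
  simp [hdim]

theorem trace_root_X_pow_sub_C_pow_of_pos_of_lt_two_mul (hm : m ≠ 0) {t : ℕ} (h0 : 0 < t)
    (ht : t < 2 * m) :
    Algebra.trace R (AdjoinRoot (X ^ m - C D)) (root (X ^ m - C D) ^ t) =
      if t = m then m * D else 0 := by
  rcases lt_or_ge t m with h | h
  · rw [trace_root_X_pow_sub_C_pow_of_lt D hm h, if_neg (by omega), if_neg (by omega)]
  · obtain ⟨s, rfl⟩ := Nat.exists_eq_add_of_le h
    rw [root_X_pow_sub_C_pow_add, map_smul, trace_root_X_pow_sub_C_pow_of_lt D hm (by omega),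
      smul_eq_mul]
    by_cases hs : s = 0 <;> simp [hs, mul_comm]

theorem trace_algebraMap_mul_root_mul_root_pow_mul_root_pow (hm : m ≠ 0) (r : R) {k l : ℕ}
    (hk : k < m) (hl : l < m) :
    Algebra.trace R (AdjoinRoot (X ^ m - C D)) (algebraMap R _ r * root (X ^ m - C D) *
      root (X ^ m - C D) ^ k * root (X ^ m - C D) ^ l) =
      if k + l + 1 = m then r * (m * D) else 0 := by
  have hmul : algebraMap R _ r * root (X ^ m - C D) * root (X ^ m - C D) ^ k *
      root (X ^ m - C D) ^ l = r • root (X ^ m - C D) ^ (k + l + 1) := by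
    rw [Algebra.smul_def]
    ring
  rw [hmul, map_smul, trace_root_X_pow_sub_C_pow_of_pos_of_lt_two_mul D hm (by omega) (by omega),
    smul_eq_mul, mul_ite, mul_zero]

end AdjoinRoot

namespace LinearMap.BilinForm

theorem apply_equivFun_symm_of_diagonal {R M ι : Type*} [CommSemiring R] [AddCommMonoid M]
    [Module R M] [Fintype ι] [DecidableEq ι] (B : LinearMap.BilinForm R M)
    (b : Module.Basis ι R M) {d : ι → R}
    (hb : ∀ i j, B (b i) (b j) = if i = j then d i else 0) (u v : ι → R) :
    B (b.equivFun.symm u) (b.equivFun.symm v) = ∑ i, d i * u i * v i := by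
  simp [Module.Basis.equivFun_symm_apply, hb, mul_comm, mul_left_comm]

variable {K V : Type*} [Field K] [AddCommGroup V] [Module K V]

theorem apply_add_altSign_smul_of_hyperbolic (B : LinearMap.BilinForm K V) (h2 : (2 : K) ≠ 0)
    {m : ℕ} {p q : ℕ → V}
    (hpp : ∀ k l, 2 * k < m → 2 * l < m → B (p k) (p l) = 0)
    (hqq : ∀ k l, 2 * k < m → 2 * l < m → B (q k) (q l) = 0)
    (hpq : ∀ k l, 2 * k < m → 2 * l < m → B (p k) (q l) = if k = l then 1 else 0)
    (hqp : ∀ k l, 2 * k < m → 2 * l < m → B (q k) (p l) = if k = l then 1 else 0)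
    (i j : Fin m) :
    B (p (i / 2) + (altSign K i / 2) • q (i / 2)) (p (j / 2) + (altSign K j / 2) • q (j / 2)) =
      if i = j then altSign K i else 0 := by
  have hi : 2 * (i / 2 : ℕ) < m := by omega
  have hj : 2 * (j / 2 : ℕ) < m := by omega
  simp only [add_left, add_right, smul_left, smul_right, hpp _ _ hi hj, hqq _ _ hi hj,
    hpq _ _ hi hj, hqp _ _ hi hj, mul_zero, zero_add, add_zero]
  split_ifs with hkl hij hij
  · subst hij
    field_simp
    ring
  · have hparity : (i : ℕ) % 2 ≠ j % 2 := fun h => hij (Fin.ext (by omega))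
    simp only [altSign, mul_one]
    split_ifs <;> first | omega | ring
  · exact (hkl (by rw [hij])).elim
  · ring

theorem apply_add_altSign_smul_of_antidiagonal (B : LinearMap.BilinForm K V) (h2 : (2 : K) ≠ 0)
    {c : K} (hc : c ≠ 0) {m : ℕ} (hm : Even m) {v : ℕ → V}
    (hv : ∀ k l, k < m → l < m → B (v k) (v l) = if k + l + 1 = m then c else 0)
    (i j : Fin m) :
    B (c⁻¹ • v (i / 2) + (altSign K i / 2) • v (m - 1 - i / 2))
      (c⁻¹ • v (j / 2) + (altSign K j / 2) • v (m - 1 - j / 2)) =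
      if i = j then altSign K i else 0 := by
  obtain ⟨n, rfl⟩ := hm
  refine B.apply_add_altSign_smul_of_hyperbolic h2 (p := fun k => c⁻¹ • v k)
    (q := fun k => v (n + n - 1 - k))
    (fun k l hk hl => ?_) (fun k l hk hl => ?_) (fun k l hk hl => ?_) (fun k l hk hl => ?_) i j
  · rw [smul_left, smul_right, hv k l (by omega) (by omega), if_neg (by omega), mul_zero, mul_zero]
  · rw [hv _ _ (by omega) (by omega), if_neg (by omega)]
  · simp only [smul_left, hv _ _ (by omega : k < n + n) (by omega : n + n - 1 - l < n + n),
      show k + (n + n - 1 - l) + 1 = n + n ↔ k = l by omega]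
    split_ifs <;> simp [hc]
  · simp only [smul_right, hv _ _ (by omega : n + n - 1 - k < n + n) (by omega : l < n + n),
      show n + n - 1 - k + l + 1 = n + n ↔ k = l by omega]
    split_ifs <;> simp [hc]

end LinearMap.BilinForm

open AdjoinRoot LinearMap.BilinForm

theorem trace_form_scaled_root_even_general (L : Type*) [Field L] (m : ℕ) (heven : Even m)
    (hchar : ((2 * m : ℕ) : L) ≠ 0) (D a : L) (hD : D ≠ 0) (ha : a ≠ 0) :
    ∃ e : (Fin m → L) ≃ₗ[L] AdjoinRoot (X ^ m - C D),
      ∀ u v : Fin m → L,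
        Algebra.trace L (AdjoinRoot (X ^ m - C D))
            ((m : AdjoinRoot (X ^ m - C D)) *
              algebraMap L (AdjoinRoot (X ^ m - C D)) a *
              AdjoinRoot.root (X ^ m - C D) * e u * e v) =
        ∑ i : Fin m, (if (i : ℕ) % 2 = 0 then (1 : L) else -1) * u i * v i := by
  have h2m : (2 : L) * m ≠ 0 := by exact_mod_cast hchar
  have hm : m ≠ 0 := by rintro rfl; simp at h2m
  have hmL : (m : L) ≠ 0 := right_ne_zero_of_mul h2m
  have hc : m * a * (m * D) ≠ 0 := mul_ne_zero (mul_ne_zero hmL ha) (mul_ne_zero hmL hD)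
  let B := (Algebra.traceForm L (AdjoinRoot (X ^ m - C D))).compLeft
    (Algebra.lmul L (AdjoinRoot (X ^ m - C D)) ((m : AdjoinRoot (X ^ m - C D)) *
      algebraMap L (AdjoinRoot (X ^ m - C D)) a * root (X ^ m - C D)))
  have hw := B.apply_add_altSign_smul_of_antidiagonal (left_ne_zero_of_mul h2m) hc heven
    fun k l hk hl => by
      simpa [B, mul_assoc] using
        trace_algebraMap_mul_root_mul_root_pow_mul_root_pow D hm (m * a) hk hl
  have hli : LinearIndependent L _ := linearIndependent_of_iIsOrtho
    (iIsOrtho_def.2 fun i j hij => by rw [hw, if_neg hij]) fun i => by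
      rw [hw, if_pos rfl]
      exact altSign_ne_zero L i
  have : NeZero m := ⟨hm⟩
  let b := basisOfLinearIndependentOfCardEqFinrank hli <| by
    rw [Fintype.card_fin, (powerBasis' (monic_X_pow_sub_C D hm)).finrank, powerBasis'_dim,
      natDegree_X_pow_sub_C]
  refine ⟨b.equivFun.symm, B.apply_equivFun_symm_of_diagonal b (d := fun i => altSign L i) ?_⟩
  intro i j
  simpa only [b, coe_basisOfLinearIndependentOfCardEqFinrank] using hw i j

/-- For `m` even, `char L ∤ 2m`, and `D, a ∈ Lˣ`, the bilinear form
`(u, v) ↦ Tr_{E/L}(m·a·x·u·v)` on `E = L[x]/(x^m − D)` is isometric to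
`(m/2)·h`, i.e. to the diagonal form `⟨1, −1, …, 1, −1⟩` with `m/2` hyperbolic pairs. -/
theorem trace_form_scaled_root_even (L : Type*) [Field L] (m : ℕ) (hm : 2 ≤ m) (heven : Even m)
    (hchar : ((2 * m : ℕ) : L) ≠ 0) (D a : L) (hD : D ≠ 0) (ha : a ≠ 0) :
    ∃ e : (Fin m → L) ≃ₗ[L] AdjoinRoot (X ^ m - C D),
      ∀ u v : Fin m → L,
        Algebra.trace L (AdjoinRoot (X ^ m - C D))
            ((m : AdjoinRoot (X ^ m - C D)) *
              algebraMap L (AdjoinRoot (X ^ m - C D)) a *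
              AdjoinRoot.root (X ^ m - C D) * e u * e v) =
        ∑ i : Fin m, (if (i : ℕ) % 2 = 0 then (1 : L) else -1) * u i * v i :=
  trace_form_scaled_root_even_general L m heven hchar D a hD ha
end

section
/- Let k be a field, let z₁, z₂ ∈ kˣ, let I = (i₁,i₂), I′ = (i₁′,i₂′), J = (j₁,j₂), J′ = (j₁′,j₂′) ∈ ℤ², and let α_I, α_{I′}, β_J, β_{J′} ∈ kˣ satisfy α_I z^I + α_{I′} z^{I′} = 0 and β_J z^J + β_{J′} z^{J′} = 0. Then the determinant of the 2×2 matrix with first row (i₁α_I z^{I−e₁} + i₁′α_{I′} z^{I′−e₁}, i₂α_I z^{I−e₂} + i₂′α_{I′} z^{I′−e₂}) and second row (j₁β_J z^{J−e₁} + j₁′β_{J′} z^{J′−e₁}, j₂β_J z^{J−e₂} + j₂′β_{J′} z^{J′−e₂}) equals ((i₁−i₁′)(j₂−j₂′) − (i₂−i₂′)(j₁−j₁′)) · α_I β_J · z^{I+J−(1,1)}. -/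
/-!
At a zero of the binomial `a x^V + a' x^{V'}` the two terms cancel, so every partial derivative
`∂ⱼ = (V_j a x^V + V'_j a' x^{V'}) / x_j` collapses to `(V_j - V'_j) a x^V / x_j`. The Jacobian
therefore has rows `(i - i') α_I z^I` and `(j - j') β_J z^J`, scaled columnwise by `1/z₁, 1/z₂`,
and its determinant is the `2 × 2` minor of the exponent differences times `α_I β_J z^{I+J-(1,1)}`.
-/

/-- For `z = (z₁, z₂)` with `z₁, z₂ ∈ kˣ` and `V ∈ ℤ²`, the monomial `z^V = z₁^{V₁} z₂^{V₂}`
regarded as an element of `k`. -/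
def zmon {k : Type*} [Field k] (z₁ z₂ : kˣ) (V : ℤ × ℤ) : k :=
  ((z₁ ^ V.1 * z₂ ^ V.2 : kˣ) : k)

section zmon

variable {k : Type*} [Field k] (z₁ z₂ : kˣ)

theorem zmon_ne_zero (V : ℤ × ℤ) : zmon z₁ z₂ V ≠ 0 :=
  (z₁ ^ V.1 * z₂ ^ V.2).ne_zero

theorem zmon_add (V W : ℤ × ℤ) : zmon z₁ z₂ (V + W) = zmon z₁ z₂ V * zmon z₁ z₂ W := by
  simp only [zmon, Prod.fst_add, Prod.snd_add, zpow_add, Units.val_mul]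
  ring

theorem zmon_mul_zmon_of_add_eq {V W U : ℤ × ℤ} (h : V + W = U) :
    zmon z₁ z₂ V * zmon z₁ z₂ W = zmon z₁ z₂ U := by
  rw [← zmon_add, h]

theorem zmon_sub (V W : ℤ × ℤ) : zmon z₁ z₂ (V - W) = zmon z₁ z₂ V / zmon z₁ z₂ W := by
  rw [eq_div_iff (zmon_ne_zero z₁ z₂ W), ← zmon_add, sub_add_cancel]

theorem binomial_weighted_eq_of_eq_zero {a a' : k} {V V' : ℤ × ℤ}
    (h : a * zmon z₁ z₂ V + a' * zmon z₁ z₂ V' = 0) (c c' : k) (W : ℤ × ℤ) :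
    c * a * zmon z₁ z₂ (V - W) + c' * a' * zmon z₁ z₂ (V' - W) =
      (c - c') * a * zmon z₁ z₂ (V - W) := by
  rw [zmon_sub, zmon_sub]
  linear_combination (c' / zmon z₁ z₂ W) * h

end zmon

/-- The determinant of the Jacobian matrix of the two local binomial equations
`α_I x^I + α_{I′} x^{I′}` and `β_J x^J + β_{J′} x^{J′}` at a common zero `(z₁, z₂)` equals
`((i₁−i₁′)(j₂−j₂′) − (i₂−i₂′)(j₁−j₁′)) · α_I β_J · z^{I+J−(1,1)}`. -/
theorem jacobian_det_binomials (k : Type*) [Field k] (z₁ z₂ : kˣ) (I I' J J' : ℤ × ℤ)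
    (αI αI' βJ βJ' : kˣ)
    (h₁ : (αI : k) * zmon z₁ z₂ I + (αI' : k) * zmon z₁ z₂ I' = 0)
    (h₂ : (βJ : k) * zmon z₁ z₂ J + (βJ' : k) * zmon z₁ z₂ J' = 0) :
    Matrix.det
      !![(I.1 : k) * (αI : k) * zmon z₁ z₂ (I - (1, 0)) +
            (I'.1 : k) * (αI' : k) * zmon z₁ z₂ (I' - (1, 0)),
          (I.2 : k) * (αI : k) * zmon z₁ z₂ (I - (0, 1)) +
            (I'.2 : k) * (αI' : k) * zmon z₁ z₂ (I' - (0, 1));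
          (J.1 : k) * (βJ : k) * zmon z₁ z₂ (J - (1, 0)) +
            (J'.1 : k) * (βJ' : k) * zmon z₁ z₂ (J' - (1, 0)),
          (J.2 : k) * (βJ : k) * zmon z₁ z₂ (J - (0, 1)) +
            (J'.2 : k) * (βJ' : k) * zmon z₁ z₂ (J' - (0, 1))] =
    (((I.1 - I'.1) * (J.2 - J'.2) - (I.2 - I'.2) * (J.1 - J'.1) : ℤ) : k) *
      (αI : k) * (βJ : k) * zmon z₁ z₂ (I + J - (1, 1)) := by
  have h_exp (E F : ℤ × ℤ) (hEF : E + F = (1, 1)) : I - E + (J - F) = I + J - (1, 1) := by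
    rw [← hEF]
    abel
  have h_diag := zmon_mul_zmon_of_add_eq z₁ z₂ (h_exp (1, 0) (0, 1) (by simp))
  have h_anti := zmon_mul_zmon_of_add_eq z₁ z₂ (h_exp (0, 1) (1, 0) (by simp))
  rw [Matrix.det_fin_two_of, binomial_weighted_eq_of_eq_zero z₁ z₂ h₁,
    binomial_weighted_eq_of_eq_zero z₁ z₂ h₁, binomial_weighted_eq_of_eq_zero z₁ z₂ h₂,
    binomial_weighted_eq_of_eq_zero z₁ z₂ h₂]
  push_cast
  linear_combination
    ((I.1 - I'.1) * (J.2 - J'.2) * αI * βJ : k) * h_diag -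
      ((I.2 - I'.2) * (J.1 - J'.1) * αI * βJ : k) * h_anti
end

section
/- Let k be a field and n ≥ 1. Let z₁, …, z_n ∈ kˣ, and for each i ∈ {1, …, n} let I^i, J^i ∈ ℤⁿ and α_i, β_i ∈ kˣ satisfy α_i·z^{I^i} + β_i·z^{J^i} = 0. Then the determinant of the n×n matrix M with entries M_{ij} = I^i_j·α_i·z^{I^i − e_j} + J^i_j·β_i·z^{J^i − e_j} equals det((I^i_j − J^i_j)_{i,j}) · (∏_{i=1}^n α_i) · z^{Σ_{i=1}^n I^i − e}, where e = (1, …, 1) ∈ ℤⁿ. -/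
/-!
At a zero of the binomial `αᵢ x^{Iⁱ} + βᵢ x^{Jⁱ}` we may replace `βᵢ z^{Jⁱ}` by `-αᵢ z^{Iⁱ}`, so
the `(i, j)` entry of the Jacobian becomes `αᵢ z^{Iⁱ} · (Iⁱⱼ - Jⁱⱼ) · zⱼ⁻¹`. The Jacobian is thus
the integer matrix `(Iⁱⱼ - Jⁱⱼ)` with its rows and columns rescaled, and its determinant picks up
`∏ᵢ αᵢ z^{Iⁱ} · ∏ⱼ zⱼ⁻¹ = (∏ᵢ αᵢ) z^{Σᵢ Iⁱ - e}`.
-/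

/-- For `z = (z₁,…,z_n)` with `z_i ∈ kˣ` and `V ∈ ℤⁿ`, the monomial `z^V = ∏ⱼ zⱼ^{Vⱼ}`
regarded as an element of `k`. -/
def zmonN {k : Type*} [Field k] {n : ℕ} (z : Fin n → kˣ) (V : Fin n → ℤ) : k :=
  ((∏ j, z j ^ V j : kˣ) : k)

open Finset

namespace Matrix

theorem det_of_mul_apply_mul {R ι : Type*} [CommRing R] [Fintype ι] [DecidableEq ι]
    (a b : ι → R) (A : ι → ι → R) :
    (of fun i j => a i * A i j * b j).det = (∏ i, a i) * (of A).det * ∏ j, b j := by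
  have : (of fun i j => a i * A i j * b j) = diagonal a * of A * diagonal b := by
    ext i j
    simp [mul_diagonal, diagonal_mul]
  rw [this, det_mul, det_mul, det_diagonal, det_diagonal]

end Matrix

section zmonN

variable {k : Type*} [Field k] {n : ℕ} (z : Fin n → kˣ)

theorem zmonN_zero : zmonN z 0 = 1 := by
  simp [zmonN]

theorem zmonN_add (V W : Fin n → ℤ) : zmonN z (V + W) = zmonN z V * zmonN z W := by
  simp only [zmonN, Pi.add_apply, zpow_add, prod_mul_distrib, Units.val_mul]

theorem zmonN_sub (V W : Fin n → ℤ) : zmonN z (V - W) = zmonN z V / zmonN z W := by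
  simp only [zmonN, Pi.sub_apply, zpow_sub, ← div_eq_mul_inv, prod_div_distrib,
    Units.val_div_eq_div_val]

theorem zmonN_sum {ι : Type*} (s : Finset ι) (V : ι → Fin n → ℤ) :
    zmonN z (∑ i ∈ s, V i) = ∏ i ∈ s, zmonN z (V i) := by
  classical
  induction s using Finset.induction_on with
  | empty => exact zmonN_zero z
  | insert i s hi ih => rw [sum_insert hi, prod_insert hi, zmonN_add, ih]

theorem zmonN_single (j : Fin n) : zmonN z (Pi.single j 1) = z j := by
  simp [zmonN, Pi.single_apply]

theorem zmonN_one : zmonN z 1 = ∏ j, (z j : k) := by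
  simp [zmonN]

end zmonN

theorem binomial_partial_eq_of_eq_zero {k : Type*} [Field k] {n : ℕ} (z : Fin n → kˣ)
    (V W : Fin n → ℤ) (a b : k) (h : a * zmonN z V + b * zmonN z W = 0) (j : Fin n) :
    (V j : k) * a * zmonN z (V - Pi.single j 1) + (W j : k) * b * zmonN z (W - Pi.single j 1) =
      a * zmonN z V * ((V j - W j : ℤ) : k) * (z j : k)⁻¹ := by
  rw [zmonN_sub, zmonN_sub, zmonN_single]
  push_cast
  linear_combination (W j : k) / z j * h

theorem jacobian_det_binomials_dim_n_general (k : Type*) [Field k] (n : ℕ)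
    (z : Fin n → kˣ) (I J : Fin n → Fin n → ℤ) (α β : Fin n → kˣ)
    (h : ∀ i, (α i : k) * zmonN z (I i) + (β i : k) * zmonN z (J i) = 0) :
    (Matrix.of fun i j : Fin n =>
        (I i j : k) * (α i : k) * zmonN z (I i - Pi.single j 1) +
        (J i j : k) * (β i : k) * zmonN z (J i - Pi.single j 1)).det =
    (((Matrix.of fun i j : Fin n => I i j - J i j).det : ℤ) : k) *
      (∏ i, (α i : k)) * zmonN z ((∑ i, I i) - 1) := by
  simp only [binomial_partial_eq_of_eq_zero z _ _ _ _ (h _)]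
  rw [Matrix.det_of_mul_apply_mul, Int.cast_det, zmonN_sub, zmonN_sum, zmonN_one,
    prod_mul_distrib, prod_inv_distrib]
  simp only [Matrix.map, Matrix.of_apply]
  ring

/-- The determinant of the Jacobian matrix of the local binomial equations
`fᵢ′ = αᵢ x^{Iⁱ} + βᵢ x^{Jⁱ}` at a common zero `z` (with all coordinates units) equals
`det((Iⁱⱼ − Jⁱⱼ)) · (∏ᵢ αᵢ) · z^{Σᵢ Iⁱ − e}` where `e = (1,…,1)`. -/
theorem jacobian_det_binomials_dim_n (k : Type*) [Field k] (n : ℕ) (hn : 1 ≤ n)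
    (z : Fin n → kˣ) (I J : Fin n → Fin n → ℤ) (α β : Fin n → kˣ)
    (h : ∀ i, (α i : k) * zmonN z (I i) + (β i : k) * zmonN z (J i) = 0) :
    (Matrix.of fun i j : Fin n =>
        (I i j : k) * (α i : k) * zmonN z (I i - Pi.single j 1) +
        (J i j : k) * (β i : k) * zmonN z (J i - Pi.single j 1)).det =
    (((Matrix.of fun i j : Fin n => I i j - J i j).det : ℤ) : k) *
      (∏ i, (α i : k)) * zmonN z ((∑ i, I i) - 1) :=
  jacobian_det_binomials_dim_n_general k n z I J α β h
end
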